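/- arXiv:2408.14759 — 7 statements merged into one kernel-verified Lean document; each statement's English description precedes it below -/
import Mathlib

section
/- Let T, V, n, q be positive integers. For h ∈ Fin T let W h be an n×n positive definite real matrix; for υ ∈ Fin V let G υ be an n×n real matrix and K̃ υ a q×n real matrix; let U be a q×q symmetric real matrix and ū : Fin q → ℝ with ū e ≥ 0 for all e. Assume that for every h ∈ Fin T and υ ∈ Fin V the matrix 𝔾 h υ = (G υ)ᵀ + G υ − W h is positive definite and the 2×2 block matrix with blocks [−U , K̃ υ ; (K̃ υ)ᵀ , −(𝔾 h υ)] is negative semidefinite, and that U e e ≤ (ū e)² for every e ∈ Fin q. Then for all convex weights θ on Fin T and ϑ on Fin V and every vector x ∈ ℝⁿ with ∑_h θ h · (xᵀ·(W h)⁻¹·x) ≤ 1, the vector u = (∑_υ ϑ υ · (K̃ υ · (G υ)⁻¹))·x satisfies |u e| ≤ ū e for every e ∈ Fin q. -/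
/-!
Write `z = G⁻¹ x`, so that `u = K z` for a single rule. Testing the LMI on `(eₑ, t z)` gives a
quadratic in `t` that is nonnegative, whose discriminant yields `(K z)ₑ² ≤ Uₑₑ · zᵀ 𝔾 z`.
Completing the square, `(x − W z)ᵀ W⁻¹ (x − W z) ≥ 0` gives `zᵀ (Gᵀ + G − W) z ≤ xᵀ W⁻¹ x`.
Averaging over the rules `h` with the weights `θ` bounds `(K z)ₑ²` by `Uₑₑ ≤ ūₑ²`, and the fuzzy
input is a convex combination over `υ` of such single-rule inputs.
-/
open Matrix

namespace Matrix

variable {m n : Type*} [Fintype m] [Fintype n]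

theorem sq_dotProduct_mulVec_le_of_posSemidef_fromBlocks {A : Matrix m m ℝ} {B : Matrix m n ℝ}
    {D : Matrix n n ℝ} (h : (fromBlocks A B Bᵀ D).PosSemidef) (a : m → ℝ) (z : n → ℝ) :
    (a ⬝ᵥ B *ᵥ z) ^ 2 ≤ (a ⬝ᵥ A *ᵥ a) * (z ⬝ᵥ D *ᵥ z) := by
  have hquad (t : ℝ) :
      0 ≤ (z ⬝ᵥ D *ᵥ z) * (t * t) + 2 * (a ⬝ᵥ B *ᵥ z) * t + a ⬝ᵥ A *ᵥ a := by
    have := h.dotProduct_mulVec_nonneg (Sum.elim a (t • z))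
    have hsymm : z ⬝ᵥ Bᵀ *ᵥ a = a ⬝ᵥ B *ᵥ z := by
      rw [dotProduct_mulVec, vecMul_transpose, dotProduct_comm]
    simp only [star_trivial, fromBlocks_mulVec, sumElim_dotProduct_sumElim, Sum.elim_comp_inl,
      Sum.elim_comp_inr, mulVec_smul, dotProduct_add, dotProduct_smul, smul_dotProduct,
      smul_eq_mul, hsymm] at this
    linarith
  have := discrim_le_zero hquad
  rw [discrim] at this
  nlinarith

theorem PosDef.two_mul_dotProduct_le [DecidableEq n] {W : Matrix n n ℝ} (hW : W.PosDef)
    (y z : n → ℝ) : 2 * (y ⬝ᵥ z) ≤ y ⬝ᵥ W⁻¹ *ᵥ y + z ⬝ᵥ W *ᵥ z := by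
  have hinv : W⁻¹ *ᵥ (W *ᵥ z) = z := by
    rw [mulVec_mulVec, nonsing_inv_mul _ hW.det_pos.ne'.isUnit, one_mulVec]
  have hsymm : (W *ᵥ z) ⬝ᵥ W⁻¹ *ᵥ y = y ⬝ᵥ z := by
    have hWinv : W⁻¹.IsSymm := by simpa using hW.isHermitian.inv
    rw [dotProduct_mulVec, ← mulVec_transpose, hWinv.eq, hinv, dotProduct_comm]
  have := hW.inv.posSemidef.dotProduct_mulVec_nonneg (y - W *ᵥ z)
  simp only [star_trivial, mulVec_sub, dotProduct_sub, sub_dotProduct, hinv, hsymm] at this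
  rw [dotProduct_comm (W *ᵥ z) z] at this
  linarith

theorem isUnit_det_of_posDef_transpose_add [DecidableEq n] {G : Matrix n n ℝ}
    (h : (Gᵀ + G).PosDef) : IsUnit G.det := by
  rw [isUnit_iff_ne_zero]
  intro hdet
  obtain ⟨v, hv, hGv⟩ := exists_mulVec_eq_zero_iff.2 hdet
  have := h.dotProduct_mulVec_pos hv
  rw [add_mulVec, dotProduct_add, dotProduct_mulVec, vecMul_transpose] at this
  simp [hGv] at this

theorem sq_mul_inv_mulVec_apply_le [DecidableEq n] {W G : Matrix n n ℝ} {K : Matrix m n ℝ}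
    {U : Matrix m m ℝ} (hW : W.PosDef) (hG : (Gᵀ + G - W).PosDef)
    (hLMI : (-(fromBlocks (-U) K Kᵀ (-(Gᵀ + G - W)))).PosSemidef) (x : n → ℝ) (e : m) :
    ((K * G⁻¹) *ᵥ x) e ^ 2 ≤ U e e * (x ⬝ᵥ W⁻¹ *ᵥ x) := by
  classical
  have hGdet : IsUnit G.det :=
    isUnit_det_of_posDef_transpose_add (by simpa using hG.add_posSemidef hW.posSemidef)
  set z := G⁻¹ *ᵥ x
  have hGz : G *ᵥ z = x := by rw [mulVec_mulVec, mul_nonsing_inv _ hGdet, one_mulVec]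
  have hblock : (fromBlocks U (-K) (-K)ᵀ (Gᵀ + G - W)).PosSemidef := by
    simpa [fromBlocks_neg] using hLMI
  have hUee : 0 ≤ U e e := by simpa using hblock.diag_nonneg (i := Sum.inl e)
  have hz : z ⬝ᵥ (Gᵀ + G - W) *ᵥ z ≤ x ⬝ᵥ W⁻¹ *ᵥ x := by
    have := hW.two_mul_dotProduct_le x z
    rw [sub_mulVec, add_mulVec, dotProduct_sub, dotProduct_add, dotProduct_mulVec z Gᵀ,
      vecMul_transpose, hGz, dotProduct_comm z x]
    linarith
  calc ((K * G⁻¹) *ᵥ x) e ^ 2 = (Pi.single e 1 ⬝ᵥ (-K) *ᵥ z) ^ 2 := by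
        simp [z, mulVec_mulVec, neg_mulVec]
    _ ≤ U e e * (z ⬝ᵥ (Gᵀ + G - W) *ᵥ z) := by
        simpa [mulVec_single] using
          sq_dotProduct_mulVec_le_of_posSemidef_fromBlocks hblock (Pi.single e 1) z
    _ ≤ U e e * (x ⬝ᵥ W⁻¹ *ᵥ x) := mul_le_mul_of_nonneg_left hz hUee

end Matrix

theorem le_of_forall_le_mul_of_weighted_sum_le_one {ι : Type*} [Fintype ι] {θ q : ι → ℝ}
    {c u : ℝ} (hθ : ∀ i, 0 ≤ θ i) (hθ1 : ∑ i, θ i = 1) (hq : ∑ i, θ i * q i ≤ 1) (hu : 0 ≤ u)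
    (h : ∀ i, c ≤ u * q i) : c ≤ u :=
  calc c = ∑ i, θ i * c := by rw [← Finset.sum_mul, hθ1, one_mul]
    _ ≤ ∑ i, θ i * (u * q i) := Finset.sum_le_sum fun i _ => mul_le_mul_of_nonneg_left (h i) (hθ i)
    _ = u * ∑ i, θ i * q i := by rw [Finset.mul_sum]; exact Finset.sum_congr rfl fun i _ => by ring
    _ ≤ u := by simpa using mul_le_mul_of_nonneg_left hq hu

theorem stmt_1_general (T V n q : ℕ) (hT : 0 < T)
    (W : Fin T → Matrix (Fin n) (Fin n) ℝ) (hW : ∀ h, (W h).PosDef)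
    (G : Fin V → Matrix (Fin n) (Fin n) ℝ)
    (Kt : Fin V → Matrix (Fin q) (Fin n) ℝ)
    (U : Matrix (Fin q) (Fin q) ℝ)
    (ub : Fin q → ℝ) (hub : ∀ e, 0 ≤ ub e)
    (hGpd : ∀ h υ, ((G υ)ᵀ + G υ - W h).PosDef)
    (hLMI : ∀ h υ,
      (-(Matrix.fromBlocks (-U) (Kt υ) (Kt υ)ᵀ
          (-((G υ)ᵀ + G υ - W h)))).PosSemidef)
    (hUdiag : ∀ e, U e e ≤ (ub e) ^ 2) :
    ∀ (θ : Fin T → ℝ) (ϑ : Fin V → ℝ) (x : Fin n → ℝ),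
      (∀ h, 0 ≤ θ h) → ∑ h, θ h = 1 →
      (∀ υ, 0 ≤ ϑ υ) → ∑ υ, ϑ υ = 1 →
      (∑ h, θ h * (x ⬝ᵥ (W h)⁻¹ *ᵥ x)) ≤ 1 →
      ∀ e, |((∑ υ, ϑ υ • (Kt υ * (G υ)⁻¹)) *ᵥ x) e| ≤ ub e := by
  intro θ ϑ x hθ hθ1 hϑ hϑ1 hx e
  have hrule (υ : Fin V) : |((Kt υ * (G υ)⁻¹) *ᵥ x) e| ≤ ub e := by
    have hUee : 0 ≤ U e e := by simpa using (hLMI ⟨0, hT⟩ υ).diag_nonneg (i := Sum.inl e)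
    refine abs_le_of_sq_le_sq (le_trans ?_ (hUdiag e)) (hub e)
    exact le_of_forall_le_mul_of_weighted_sum_le_one hθ hθ1 hx hUee fun h =>
      sq_mul_inv_mulVec_apply_le (hW h) (hGpd h υ) (hLMI h υ) x e
  rw [sum_mulVec, Finset.sum_apply]
  simp only [smul_mulVec, Pi.smul_apply]
  exact abs_le.2 <| (convex_Icc (-ub e) (ub e)).sum_mem (fun υ _ => hϑ υ) hϑ1
    fun υ _ => abs_le.1 (hrule υ)

/-- Input-constraint part of Lemma 2: the LMI (3-21) guarantees the
componentwise hard bound `|uₑ| ≤ ūₑ` for the fuzzy feedback input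
`u = (∑ᵥ ϑᵥ K̃ᵥ Gᵥ⁻¹) x` on the ellipsoid `∑ₕ θₕ xᵀ Wₕ⁻¹ x ≤ 1`. -/
theorem stmt_1 (T V n q : ℕ) (hT : 0 < T) (hV : 0 < V) (hn : 0 < n) (hq : 0 < q)
    (W : Fin T → Matrix (Fin n) (Fin n) ℝ) (hW : ∀ h, (W h).PosDef)
    (G : Fin V → Matrix (Fin n) (Fin n) ℝ)
    (Kt : Fin V → Matrix (Fin q) (Fin n) ℝ)
    (U : Matrix (Fin q) (Fin q) ℝ) (hU : U.IsHermitian)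
    (ub : Fin q → ℝ) (hub : ∀ e, 0 ≤ ub e)
    (hGpd : ∀ h υ, ((G υ)ᵀ + G υ - W h).PosDef)
    (hLMI : ∀ h υ,
      (-(Matrix.fromBlocks (-U) (Kt υ) (Kt υ)ᵀ
          (-((G υ)ᵀ + G υ - W h)))).PosSemidef)
    (hUdiag : ∀ e, U e e ≤ (ub e) ^ 2) :
    ∀ (θ : Fin T → ℝ) (ϑ : Fin V → ℝ) (x : Fin n → ℝ),
      (∀ h, 0 ≤ θ h) → ∑ h, θ h = 1 →
      (∀ υ, 0 ≤ ϑ υ) → ∑ υ, ϑ υ = 1 →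
      (∑ h, θ h * (x ⬝ᵥ (W h)⁻¹ *ᵥ x)) ≤ 1 →
      ∀ e, |((∑ υ, ϑ υ • (Kt υ * (G υ)⁻¹)) *ᵥ x) e| ≤ ub e :=
  stmt_1_general T V n q hT W hW G Kt U ub hub hGpd hLMI hUdiag
end

section
/- Let T, n, m be positive integers. For h ∈ Fin T let W h be an n×n positive definite real matrix; let Φ be an m×n real matrix, X an m×m symmetric real matrix, and x̄ : Fin m → ℝ with x̄ f ≥ 0 for all f. Assume that for every h ∈ Fin T the 2×2 block matrix with blocks [−X , Φ·(W h) ; (Φ·(W h))ᵀ , −(W h)] is negative semidefinite, and that X f f ≤ (x̄ f)² for every f ∈ Fin m. Then for all convex weights θ on Fin T and every vector x ∈ ℝⁿ with ∑_h θ h · (xᵀ·(W h)⁻¹·x) ≤ 1, one has |(Φ·x) f| ≤ x̄ f for every f ∈ Fin m. -/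
/-!
Testing the (negated) LMI of the `h`-th vertex at the vector `(e_f, c • W_h⁻¹ x)`, with
`c = (Φ x)_f`, gives `2c² ≤ X_ff + c² · xᵀ W_h⁻¹ x`. Averaging over `h` with the weights `θ`
and using the ellipsoid bound yields `c² ≤ X_ff ≤ x̄_f²`.
-/

open Matrix

namespace Matrix

variable {l n R : Type*} [Fintype l] [Fintype n]

theorem PosSemidef.fromBlocks_dotProduct_mulVec_nonneg [Ring R] [PartialOrder R] [StarRing R]
    {A : Matrix l l R} {B : Matrix l n R} {C : Matrix n l R} {D : Matrix n n R}
    (hM : (fromBlocks A B C D).PosSemidef) (u : l → R) (v : n → R) :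
    0 ≤ star u ⬝ᵥ A *ᵥ u + star u ⬝ᵥ B *ᵥ v + (star v ⬝ᵥ C *ᵥ u + star v ⬝ᵥ D *ᵥ v) := by
  have := hM.dotProduct_mulVec_nonneg (Sum.elim u v)
  simpa only [fromBlocks_mulVec, Sum.elim_comp_inl, Sum.elim_comp_inr, Function.star_sumElim,
    sumElim_dotProduct_sumElim, dotProduct_add] using this

theorem two_mul_dotProduct_le_of_posSemidef_neg_fromBlocks [CommRing R] [PartialOrder R]
    [IsOrderedRing R] [StarRing R] [TrivialStar R] [DecidableEq n]
    {X : Matrix l l R} {Φ : Matrix l n R} {W : Matrix n n R} (hW : IsUnit W)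
    (hLMI : (-(fromBlocks (-X) (Φ * W) (Φ * W)ᵀ (-W))).PosSemidef) (u : l → R) (x : n → R)
    (t : R) :
    2 * t * (u ⬝ᵥ Φ *ᵥ x) ≤ u ⬝ᵥ X *ᵥ u + t ^ 2 * (x ⬝ᵥ W⁻¹ *ᵥ x) := by
  rw [fromBlocks_neg, neg_neg, neg_neg] at hLMI
  have hWW : W * W⁻¹ = 1 := mul_nonsing_inv _ ((isUnit_iff_isUnit_det W).mp hW)
  have hΦ : (Φ * W) *ᵥ (W⁻¹ *ᵥ x) = Φ *ᵥ x := by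
    rw [mulVec_mulVec, Matrix.mul_assoc, hWW, Matrix.mul_one]
  have hW' : W *ᵥ (W⁻¹ *ᵥ x) = x := by
    rw [mulVec_mulVec, hWW, one_mulVec]
  have hcross : (W⁻¹ *ᵥ x) ⬝ᵥ (-(Φ * W))ᵀ *ᵥ u = -(u ⬝ᵥ Φ *ᵥ x) := by
    rw [dotProduct_mulVec, vecMul_transpose, neg_mulVec, hΦ, dotProduct_comm, dotProduct_neg]
  have := hLMI.fromBlocks_dotProduct_mulVec_nonneg u (t • (W⁻¹ *ᵥ x))
  simp only [star_trivial, ← transpose_neg, neg_mulVec, mulVec_smul, hΦ, hW', dotProduct_neg,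
    dotProduct_smul, smul_dotProduct, smul_eq_mul, hcross, dotProduct_comm _ x] at this
  linear_combination this

end Matrix

theorem stmt_2_general (T n m : ℕ)
    (W : Fin T → Matrix (Fin n) (Fin n) ℝ) (hW : ∀ h, (W h).PosDef)
    (Φ : Matrix (Fin m) (Fin n) ℝ)
    (X : Matrix (Fin m) (Fin m) ℝ)
    (xb : Fin m → ℝ) (hxb : ∀ f, 0 ≤ xb f)
    (hLMI : ∀ h,
      (-(Matrix.fromBlocks (-X) (Φ * W h) (Φ * W h)ᵀ (-(W h)))).PosSemidef)
    (hXdiag : ∀ f, X f f ≤ (xb f) ^ 2) :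
    ∀ (θ : Fin T → ℝ) (x : Fin n → ℝ),
      (∀ h, 0 ≤ θ h) → ∑ h, θ h = 1 →
      (∑ h, θ h * (x ⬝ᵥ (W h)⁻¹ *ᵥ x)) ≤ 1 →
      ∀ f, |(Φ *ᵥ x) f| ≤ xb f := by
  intro θ x hθ hθ1 hell f
  set c := (Φ *ᵥ x) f
  have hper (h : Fin T) : 2 * c * c ≤ X f f + c ^ 2 * (x ⬝ᵥ (W h)⁻¹ *ᵥ x) := by
    simpa [c] using
      two_mul_dotProduct_le_of_posSemidef_neg_fromBlocks (hW h).isUnit (hLMI h) (Pi.single f 1) x c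
  have havg : 2 * c * c ≤ X f f + c ^ 2 * ∑ h, θ h * (x ⬝ᵥ (W h)⁻¹ *ᵥ x) :=
    calc 2 * c * c = ∑ h, θ h * (2 * c * c) := by rw [← Finset.sum_mul, hθ1, one_mul]
      _ ≤ ∑ h, θ h * (X f f + c ^ 2 * (x ⬝ᵥ (W h)⁻¹ *ᵥ x)) :=
        Finset.sum_le_sum fun h _ ↦ mul_le_mul_of_nonneg_left (hper h) (hθ h)
      _ = X f f + c ^ 2 * ∑ h, θ h * (x ⬝ᵥ (W h)⁻¹ *ᵥ x) := by
        simp only [mul_add, Finset.sum_add_distrib, ← Finset.sum_mul, hθ1, one_mul,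
          Finset.mul_sum, mul_left_comm (θ _)]
  have hc : c ^ 2 ≤ xb f ^ 2 := by
    nlinarith [mul_le_mul_of_nonneg_left hell (sq_nonneg c), hXdiag f]
  exact abs_le_of_sq_le_sq hc (hxb f)

/-- State-constraint part of Lemma 2: the LMI (3-22) guarantees the
componentwise hard bound `|(Φx)_f| ≤ x̄_f` on the ellipsoid
`∑ₕ θₕ xᵀ Wₕ⁻¹ x ≤ 1`. -/
theorem stmt_2 (T n m : ℕ) (hT : 0 < T) (hn : 0 < n) (hm : 0 < m)
    (W : Fin T → Matrix (Fin n) (Fin n) ℝ) (hW : ∀ h, (W h).PosDef)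
    (Φ : Matrix (Fin m) (Fin n) ℝ)
    (X : Matrix (Fin m) (Fin m) ℝ) (hX : X.IsHermitian)
    (xb : Fin m → ℝ) (hxb : ∀ f, 0 ≤ xb f)
    (hLMI : ∀ h,
      (-(Matrix.fromBlocks (-X) (Φ * W h) (Φ * W h)ᵀ (-(W h)))).PosSemidef)
    (hXdiag : ∀ f, X f f ≤ (xb f) ^ 2) :
    ∀ (θ : Fin T → ℝ) (x : Fin n → ℝ),
      (∀ h, 0 ≤ θ h) → ∑ h, θ h = 1 →
      (∑ h, θ h * (x ⬝ᵥ (W h)⁻¹ *ᵥ x)) ≤ 1 →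
      ∀ f, |(Φ *ᵥ x) f| ≤ xb f :=
  stmt_2_general T n m W hW Φ X xb hxb hLMI hXdiag
end

section
/- Let N, T, V, n, q be positive integers and p : Fin N → Fin N → ℝ with p i j ≥ 0 and ∑_j p i j = 1 for every i. Let S be an n×n positive definite real matrix and R a q×q positive definite real matrix. For i ∈ Fin N, h ∈ Fin T, υ ∈ Fin V let A i h be n×n, B i h be n×q, K i υ and C i υ be q×n, 𝒜 i υ be n×n real matrices, and let Ψ i υ be a 2n×2n positive definite block-diagonal matrix diag(Ψxx i υ, Ψηη i υ) with n×n positive definite blocks. Define the 2n×2n matrix Ξ i h υ as the block matrix [A i h + (B i h)·(K i υ) , (B i h)·(C i υ) ; 0 , 𝒜 i υ], the q×2n matrix Λ i υ = [K i υ , C i υ], and the n×2n matrix E = [I , 0]. Assume that for all i ∈ Fin N, h ∈ Fin T, υ, ω ∈ Fin V the matrix (Ξ i h υ)ᵀ·(∑_j p i j · Ψ j ω)·(Ξ i h υ) − Ψ i υ + Eᵀ·S·E + (Λ i υ)ᵀ·R·(Λ i υ) is negative definite. Then for every i ∈ Fin N and all convex weights θ on Fin T and ϑ, μ on Fin V,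 setting Ξ̄ = ∑_h ∑_υ (θ h · ϑ υ)·(Ξ i h υ), Λ̄ = ∑_υ ϑ υ · (Λ i υ), Ψ̄ᵢ = ∑_υ ϑ υ · (Ψ i υ) and Q̄ = ∑_j p i j · (∑_ω μ ω · (Ψ j ω)), the matrix Ξ̄ᵀ·Q̄·Ξ̄ − Ψ̄ᵢ + Eᵀ·S·E + Λ̄ᵀ·R·Λ̄ is negative definite. -/
open Matrix

/-- Augmented closed-loop matrix `Ξ = [A + BK, BC; 0, 𝒜]` of the
dynamic-prediction-optimized fuzzy Markov jump system. -/
noncomputable def XiBlk {n q : ℕ} (A : Matrix (Fin n) (Fin n) ℝ)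
    (B : Matrix (Fin n) (Fin q) ℝ) (K C : Matrix (Fin q) (Fin n) ℝ)
    (Acal : Matrix (Fin n) (Fin n) ℝ) :
    Matrix (Fin n ⊕ Fin n) (Fin n ⊕ Fin n) ℝ :=
  Matrix.fromBlocks (A + B * K) (B * C) 0 Acal

/-- The row-block matrix `Λ = [K, C]`. -/
noncomputable def LamBlk {n q : ℕ} (K C : Matrix (Fin q) (Fin n) ℝ) :
    Matrix (Fin q) (Fin n ⊕ Fin n) ℝ :=
  Matrix.fromCols K C

/-- The projection `E = [I, 0]` onto the first block of coordinates. -/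
noncomputable def EBlk (n : ℕ) : Matrix (Fin n) (Fin n ⊕ Fin n) ℝ :=
  Matrix.fromCols 1 0

/-- Block-diagonal matrix `Ψ = diag(Ψxx, Ψηη)`. -/
noncomputable def PsiBlk {n : ℕ} (Pxx Pee : Matrix (Fin n) (Fin n) ℝ) :
    Matrix (Fin n ⊕ Fin n) (Fin n ⊕ Fin n) ℝ :=
  Matrix.fromBlocks Pxx 0 0 Pee

/-! The per-rule matrix `Ξᵀ Q Ξ - Ψᵢ + EᵀSE + Λᵀ R Λ` of LMI (4-28), with `Q = ∑ⱼ pᵢⱼ Ψⱼ`, is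
affine in `Q` and `Ψᵢ` and, for `Q, R ⪰ 0`, convex in `(Ξ, Λ)` for the Loewner order (Jensen):
the defect `∑ wₖ Xₖᵀ Q Xₖ - X̄ᵀ Q X̄` is the weighted variance `∑ wₖ (Xₖ - X̄)ᵀ Q (Xₖ - X̄) ⪰ 0`.
So the fuzzy-combined matrix is dominated by the convex combination, with weights `θₕ ϑ_υ μ_ω`,
of the per-rule matrices, and a convex combination of negative definite matrices is negative
definite. -/

open scoped MatrixOrder

variable {ι l m k : Type*} [Fintype ι] [Fintype l] [Fintype k]

theorem Matrix.PosSemidef.fromBlocks_zero [Fintype m] {A : Matrix m m ℝ} {D : Matrix l l ℝ}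
    (hA : A.PosSemidef) (hD : D.PosSemidef) : (fromBlocks A 0 0 D).PosSemidef := by
  rw [posSemidef_iff_dotProduct_mulVec] at *
  refine ⟨hA.1.fromBlocks (by simp) hD.1, fun x => ?_⟩
  obtain ⟨u, v, rfl⟩ : ∃ u v, x = u ⊕ᵥ v := ⟨_, _, (Sum.elim_comp_inl_inr x).symm⟩
  simpa [fromBlocks_mulVec, sumElim_dotProduct_sumElim] using add_nonneg (hA.2 u) (hD.2 v)

theorem Matrix.posDef_sum_smul {w : ι → ℝ} (hw : ∀ i, 0 ≤ w i) (hw1 : ∑ i, w i = 1)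
    {M : ι → Matrix m m ℝ} (hM : ∀ i, (M i).PosDef) : (∑ i, w i • M i).PosDef := by
  classical
  rw [← Finset.sum_filter_of_ne (p := fun i => w i ≠ 0) fun i _ h hi => h (by simp [hi])]
  refine posDef_sum ?_ fun i hi => (hM i).smul ((hw i).lt_of_ne' (Finset.mem_filter.1 hi).2)
  obtain ⟨i, -, hi⟩ := Finset.exists_ne_zero_of_sum_ne_zero (hw1 ▸ one_ne_zero : ∑ i, w i ≠ 0)
  exact ⟨i, Finset.mem_filter.2 ⟨Finset.mem_univ _, hi⟩⟩

theorem Matrix.posDef_neg_of_le_sum_smul {w : ι → ℝ} (hw : ∀ i, 0 ≤ w i) (hw1 : ∑ i, w i = 1)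
    {A : Matrix m m ℝ} {M : ι → Matrix m m ℝ} (hA : A ≤ ∑ i, w i • M i)
    (hM : ∀ i, (-M i).PosDef) : (-A).PosDef := by
  have h : (-∑ i, w i • M i).PosDef := by
    simpa [Finset.sum_neg_distrib, smul_neg] using posDef_sum_smul hw hw1 hM
  convert h.add_posSemidef hA using 1
  abel

theorem Matrix.sum_smul_transpose_mul_mul_sub_eq {w : ι → ℝ} (hw1 : ∑ i, w i = 1)
    (Q : Matrix l l ℝ) (X : ι → Matrix l m ℝ) :
    ∑ i, w i • ((X i - ∑ j, w j • X j)ᵀ * Q * (X i - ∑ j, w j • X j)) =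
      ∑ i, w i • ((X i)ᵀ * Q * X i) - (∑ i, w i • X i)ᵀ * Q * ∑ i, w i • X i := by
  set Y := ∑ j, w j • X j
  have h1 : ∑ i, w i • (Yᵀ * Q * X i) = Yᵀ * Q * Y := by
    simp only [Y, Matrix.mul_sum, Matrix.mul_smul]
  have h2 : ∑ i, w i • ((X i)ᵀ * Q * Y) = Yᵀ * Q * Y := by
    simp only [Y, transpose_sum, transpose_smul, Matrix.sum_mul, Matrix.smul_mul]
  have h3 : ∑ i, w i • (Yᵀ * Q * Y) = Yᵀ * Q * Y := by
    rw [← Finset.sum_smul, hw1, one_smul]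
  simp only [transpose_sub, Matrix.sub_mul, Matrix.mul_sub, smul_sub, Finset.sum_sub_distrib,
    h1, h2, h3]
  abel

theorem Matrix.transpose_mul_mul_sum_smul_le [Fintype m] {Q : Matrix l l ℝ} (hQ : Q.PosSemidef)
    {w : ι → ℝ} (hw : ∀ i, 0 ≤ w i) (hw1 : ∑ i, w i = 1) (X : ι → Matrix l m ℝ) :
    (∑ i, w i • X i)ᵀ * Q * ∑ i, w i • X i ≤ ∑ i, w i • ((X i)ᵀ * Q * X i) := by
  rw [Matrix.le_iff, ← sum_smul_transpose_mul_mul_sub_eq hw1 Q X]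
  refine posSemidef_sum _ fun i _ => PosSemidef.smul ?_ (hw i)
  have := hQ.conjTranspose_mul_mul_same (X i - ∑ j, w j • X j)
  rwa [conjTranspose_eq_transpose_of_trivial] at this

theorem Fintype.sum_mul_smul_snd {α β R M : Type*} [Fintype α] [Fintype β] [Semiring R]
    [AddCommMonoid M] [Module R M] {θ : α → R} (hθ1 : ∑ a, θ a = 1) (ϑ : β → R) (f : β → M) :
    ∑ x : α × β, (θ x.1 * ϑ x.2) • f x.2 = ∑ b, ϑ b • f b := by
  simp only [Fintype.sum_prod_type, mul_smul, ← Finset.smul_sum, ← Finset.sum_smul, hθ1, one_smul]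

-- The matrix of LMI (4-28) for `X = Ξ`, `Q = ∑ⱼ pᵢⱼ Ψⱼ`, `P = Ψᵢ`, `C = EᵀSE`, `L = Λ`.
def decreaseMatrix (X : Matrix l m ℝ) (Q : Matrix l l ℝ) (P C : Matrix m m ℝ)
    (L : Matrix k m ℝ) (R : Matrix k k ℝ) : Matrix m m ℝ :=
  Xᵀ * Q * X - P + C + Lᵀ * R * L

theorem decreaseMatrix_sum_smul_le [Fintype m] {Q : Matrix l l ℝ} {R : Matrix k k ℝ}
    (hQ : Q.PosSemidef) (hR : R.PosSemidef) {w : ι → ℝ} (hw : ∀ i, 0 ≤ w i) (hw1 : ∑ i, w i = 1)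
    (X : ι → Matrix l m ℝ) (P : ι → Matrix m m ℝ) (C : Matrix m m ℝ) (L : ι → Matrix k m ℝ) :
    decreaseMatrix (∑ i, w i • X i) Q (∑ i, w i • P i) C (∑ i, w i • L i) R ≤
      ∑ i, w i • decreaseMatrix (X i) Q (P i) C (L i) R := by
  simp only [decreaseMatrix, smul_add, smul_sub, Finset.sum_add_distrib, Finset.sum_sub_distrib,
    ← Finset.sum_smul, hw1, one_smul]
  gcongr
  · exact transpose_mul_mul_sum_smul_le hQ hw hw1 X
  · exact transpose_mul_mul_sum_smul_le hR hw hw1 L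

theorem decreaseMatrix_sum_smul_eq {w : ι → ℝ} (hw1 : ∑ i, w i = 1) (X : Matrix l m ℝ)
    (Q : ι → Matrix l l ℝ) (P C : Matrix m m ℝ) (L : Matrix k m ℝ) (R : Matrix k k ℝ) :
    decreaseMatrix X (∑ i, w i • Q i) P C L R = ∑ i, w i • decreaseMatrix X (Q i) P C L R := by
  simp only [decreaseMatrix, smul_add, smul_sub, Finset.sum_add_distrib, Finset.sum_sub_distrib,
    ← Finset.sum_smul, hw1, one_smul, Matrix.sum_mul, Matrix.mul_sum, Matrix.smul_mul,
    Matrix.mul_smul]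

theorem posDef_neg_decreaseMatrix_convex [Fintype m] {κ : Type*} [Fintype κ]
    {Q : κ → Matrix l l ℝ} {R : Matrix k k ℝ} (hQ : ∀ ω, (Q ω).PosSemidef) (hR : R.PosSemidef)
    (X : ι → κ → Matrix l m ℝ) (P : κ → Matrix m m ℝ) (C : Matrix m m ℝ) (L : κ → Matrix k m ℝ)
    (hrule : ∀ h υ ω, (-decreaseMatrix (X h υ) (Q ω) (P υ) C (L υ) R).PosDef)
    {θ : ι → ℝ} {ϑ μ : κ → ℝ} (hθ : ∀ h, 0 ≤ θ h) (hθ1 : ∑ h, θ h = 1)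
    (hϑ : ∀ υ, 0 ≤ ϑ υ) (hϑ1 : ∑ υ, ϑ υ = 1) (hμ : ∀ ω, 0 ≤ μ ω) (hμ1 : ∑ ω, μ ω = 1) :
    (-decreaseMatrix (∑ h, ∑ υ, (θ h * ϑ υ) • X h υ) (∑ ω, μ ω • Q ω) (∑ υ, ϑ υ • P υ) C
      (∑ υ, ϑ υ • L υ) R).PosDef := by
  have hQμ : (∑ ω, μ ω • Q ω).PosSemidef :=
    posSemidef_sum _ fun ω _ => (hQ ω).smul (hμ ω)
  have hpair : ∀ h υ, (-decreaseMatrix (X h υ) (∑ ω, μ ω • Q ω) (P υ) C (L υ) R).PosDef :=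
    fun h υ => posDef_neg_of_le_sum_smul hμ hμ1 (decreaseMatrix_sum_smul_eq hμ1 ..).le
      (hrule h υ)
  have hw : ∀ x : ι × κ, 0 ≤ θ x.1 * ϑ x.2 := fun x => mul_nonneg (hθ _) (hϑ _)
  have hw1 : ∑ x : ι × κ, θ x.1 * ϑ x.2 = 1 := by
    rw [Fintype.sum_prod_type, ← Finset.sum_mul_sum, hθ1, hϑ1, one_mul]
  rw [← Fintype.sum_prod_type' fun h υ => (θ h * ϑ υ) • X h υ,
    ← Fintype.sum_mul_smul_snd hθ1 ϑ P, ← Fintype.sum_mul_smul_snd hθ1 ϑ L]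
  exact posDef_neg_of_le_sum_smul hw hw1
    (decreaseMatrix_sum_smul_le hQμ hR hw hw1 (fun x => X x.1 x.2) _ C _) fun x => hpair x.1 x.2

theorem stmt_3_general (N T V n q : ℕ)
    (p : Fin N → Fin N → ℝ) (hp : ∀ i j, 0 ≤ p i j)
    (S : Matrix (Fin n) (Fin n) ℝ)
    (R : Matrix (Fin q) (Fin q) ℝ) (hR : R.PosDef)
    (A : Fin N → Fin T → Matrix (Fin n) (Fin n) ℝ)
    (B : Fin N → Fin T → Matrix (Fin n) (Fin q) ℝ)
    (K C : Fin N → Fin V → Matrix (Fin q) (Fin n) ℝ)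
    (Acal : Fin N → Fin V → Matrix (Fin n) (Fin n) ℝ)
    (Pxx Pee : Fin N → Fin V → Matrix (Fin n) (Fin n) ℝ)
    (hPxx : ∀ i υ, (Pxx i υ).PosDef) (hPee : ∀ i υ, (Pee i υ).PosDef)
    (hLMI : ∀ (i : Fin N) (h : Fin T) (υ ω : Fin V),
      (-((XiBlk (A i h) (B i h) (K i υ) (C i υ) (Acal i υ))ᵀ *
            (∑ j, p i j • PsiBlk (Pxx j ω) (Pee j ω)) *
            XiBlk (A i h) (B i h) (K i υ) (C i υ) (Acal i υ)
          - PsiBlk (Pxx i υ) (Pee i υ)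
          + (EBlk n)ᵀ * S * EBlk n
          + (LamBlk (K i υ) (C i υ))ᵀ * R * LamBlk (K i υ) (C i υ))).PosDef) :
    ∀ (i : Fin N) (θ : Fin T → ℝ) (ϑ μ : Fin V → ℝ),
      (∀ h, 0 ≤ θ h) → ∑ h, θ h = 1 →
      (∀ υ, 0 ≤ ϑ υ) → ∑ υ, ϑ υ = 1 →
      (∀ ω, 0 ≤ μ ω) → ∑ ω, μ ω = 1 →
      (-((∑ h, ∑ υ, (θ h * ϑ υ) • XiBlk (A i h) (B i h) (K i υ) (C i υ) (Acal i υ))ᵀ *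
            (∑ j, p i j • (∑ ω, μ ω • PsiBlk (Pxx j ω) (Pee j ω))) *
            (∑ h, ∑ υ, (θ h * ϑ υ) • XiBlk (A i h) (B i h) (K i υ) (C i υ) (Acal i υ))
          - (∑ υ, ϑ υ • PsiBlk (Pxx i υ) (Pee i υ))
          + (EBlk n)ᵀ * S * EBlk n
          + (∑ υ, ϑ υ • LamBlk (K i υ) (C i υ))ᵀ * R *
              (∑ υ, ϑ υ • LamBlk (K i υ) (C i υ)))).PosDef := by
  intro i θ ϑ μ hθ hθ1 hϑ hϑ1 hμ hμ1
  have hQ : ∀ ω, (∑ j, p i j • PsiBlk (Pxx j ω) (Pee j ω)).PosSemidef := fun ω =>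
    posSemidef_sum _ fun j _ =>
      ((hPxx j ω).posSemidef.fromBlocks_zero (hPee j ω).posSemidef).smul (hp i j)
  have hswap : ∑ j, p i j • ∑ ω, μ ω • PsiBlk (Pxx j ω) (Pee j ω) =
      ∑ ω, μ ω • ∑ j, p i j • PsiBlk (Pxx j ω) (Pee j ω) := by
    simp only [Finset.smul_sum, smul_comm (p i _) (μ _)]
    exact Finset.sum_comm
  rw [hswap]
  exact posDef_neg_decreaseMatrix_convex hQ hR.posSemidef _ _ _ _ (hLMI i) hθ hθ1 hϑ hϑ1 hμ hμ1

/-- Lemma 5 of the paper: the per-rule negative definiteness of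
`Ξᵀ(∑ⱼ pᵢⱼ Ψⱼ)Ξ − Ψᵢ + EᵀSE + ΛᵀRΛ` implies the corresponding
fuzzy-combined (convex-weighted) inequality. -/
theorem stmt_3 (N T V n q : ℕ) (hN : 0 < N) (hT : 0 < T) (hV : 0 < V)
    (hn : 0 < n) (hq : 0 < q)
    (p : Fin N → Fin N → ℝ) (hp : ∀ i j, 0 ≤ p i j) (hp1 : ∀ i, ∑ j, p i j = 1)
    (S : Matrix (Fin n) (Fin n) ℝ) (hS : S.PosDef)
    (R : Matrix (Fin q) (Fin q) ℝ) (hR : R.PosDef)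
    (A : Fin N → Fin T → Matrix (Fin n) (Fin n) ℝ)
    (B : Fin N → Fin T → Matrix (Fin n) (Fin q) ℝ)
    (K C : Fin N → Fin V → Matrix (Fin q) (Fin n) ℝ)
    (Acal : Fin N → Fin V → Matrix (Fin n) (Fin n) ℝ)
    (Pxx Pee : Fin N → Fin V → Matrix (Fin n) (Fin n) ℝ)
    (hPxx : ∀ i υ, (Pxx i υ).PosDef) (hPee : ∀ i υ, (Pee i υ).PosDef)
    (hLMI : ∀ (i : Fin N) (h : Fin T) (υ ω : Fin V),
      (-((XiBlk (A i h) (B i h) (K i υ) (C i υ) (Acal i υ))ᵀ *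
            (∑ j, p i j • PsiBlk (Pxx j ω) (Pee j ω)) *
            XiBlk (A i h) (B i h) (K i υ) (C i υ) (Acal i υ)
          - PsiBlk (Pxx i υ) (Pee i υ)
          + (EBlk n)ᵀ * S * EBlk n
          + (LamBlk (K i υ) (C i υ))ᵀ * R * LamBlk (K i υ) (C i υ))).PosDef) :
    ∀ (i : Fin N) (θ : Fin T → ℝ) (ϑ μ : Fin V → ℝ),
      (∀ h, 0 ≤ θ h) → ∑ h, θ h = 1 →
      (∀ υ, 0 ≤ ϑ υ) → ∑ υ, ϑ υ = 1 →
      (∀ ω, 0 ≤ μ ω) → ∑ ω, μ ω = 1 →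
      (-((∑ h, ∑ υ, (θ h * ϑ υ) • XiBlk (A i h) (B i h) (K i υ) (C i υ) (Acal i υ))ᵀ *
            (∑ j, p i j • (∑ ω, μ ω • PsiBlk (Pxx j ω) (Pee j ω))) *
            (∑ h, ∑ υ, (θ h * ϑ υ) • XiBlk (A i h) (B i h) (K i υ) (C i υ) (Acal i υ))
          - (∑ υ, ϑ υ • PsiBlk (Pxx i υ) (Pee i υ))
          + (EBlk n)ᵀ * S * EBlk n
          + (∑ υ, ϑ υ • LamBlk (K i υ) (C i υ))ᵀ * R *
              (∑ υ, ϑ υ • LamBlk (K i υ) (C i υ)))).PosDef :=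
  stmt_3_general N T V n q p hp S R hR A B K C Acal Pxx Pee hPxx hPee hLMI
end

section
/- Let n be a positive integer and M, E, F, L be n×n real matrices with M, E, F invertible. If the product of the 2×2 block matrices [M⁻¹ , M⁻¹·E ; Eᵀ·M⁻¹ , −Eᵀ·M⁻¹·L·(Fᵀ)⁻¹] and [L , F ; Fᵀ , −E⁻¹·F] equals the 2n×2n identity matrix, then E·Fᵀ = M − L. -/
open Matrix

/-- The matrix factorization identity (4-9): if the parameterizations (4-6)
and (4-7) of `𝒫` and `𝒫⁻¹` are mutually inverse, then `E Fᵀ = M − L`. -/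
theorem stmt_4 (n : ℕ) (hn : 0 < n) (M E F L : Matrix (Fin n) (Fin n) ℝ)
    (hM : IsUnit M) (hE : IsUnit E) (hF : IsUnit F)
    (h : Matrix.fromBlocks M⁻¹ (M⁻¹ * E) (Eᵀ * M⁻¹) (-(Eᵀ * M⁻¹ * L * (Fᵀ)⁻¹)) *
          Matrix.fromBlocks L F Fᵀ (-(E⁻¹ * F)) = 1) :
    E * Fᵀ = M - L := by
  rw [Matrix.fromBlocks_multiply, ← Matrix.fromBlocks_one] at h
  have h11 : M⁻¹ * L + M⁻¹ * E * Fᵀ = 1 := by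
    have := congrArg Matrix.toBlocks₁₁ h
    simpa [Matrix.toBlocks_fromBlocks₁₁, -Matrix.fromBlocks_one] using this
  have hMinv : M * M⁻¹ = 1 := Matrix.mul_nonsing_inv M ((Matrix.isUnit_iff_isUnit_det M).mp hM)
  have := congrArg (fun X => M * X) h11
  simp only [Matrix.mul_add, ← Matrix.mul_assoc, hMinv, Matrix.one_mul, Matrix.mul_one] at this
  linear_combination (norm := noncomm_ring) this
end

section
/- Let n be a positive integer and let M, L be symmetric n×n real matrices and E, F be n×n real matrices, with M and F invertible and E·Fᵀ = M − L. Define the 2n×2n block matrices 𝒫 = [M⁻¹ , M⁻¹·E ; Eᵀ·M⁻¹ , −Eᵀ·M⁻¹·L·(Fᵀ)⁻¹] and Θ = [L , M ; Fᵀ , 0]. Then Θᵀ·𝒫·Θ equals the block matrix Δ = [L , M ; M , M]. -/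
open Matrix

/-- The congruence computation underlying Lemma 3: `Θᵀ 𝒫 Θ = Δ = [L, M; M, M]`. -/
theorem stmt_5 (n : ℕ) (hn : 0 < n) (M L E F : Matrix (Fin n) (Fin n) ℝ)
    (hMsymm : M.IsHermitian) (hLsymm : L.IsHermitian)
    (hM : IsUnit M) (hF : IsUnit F) (hEF : E * Fᵀ = M - L) :
    (Matrix.fromBlocks L M Fᵀ 0)ᵀ *
        Matrix.fromBlocks M⁻¹ (M⁻¹ * E) (Eᵀ * M⁻¹) (-(Eᵀ * M⁻¹ * L * (Fᵀ)⁻¹)) *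
        Matrix.fromBlocks L M Fᵀ 0 =
      Matrix.fromBlocks L M M M := by
  have hMT : Mᵀ = M := by simpa using hMsymm.eq
  have hLT : Lᵀ = L := by simpa using hLsymm.eq
  have hMd : IsUnit M.det := (isUnit_iff_isUnit_det M).mp hM
  have hFd : IsUnit (Fᵀ).det := by rw [det_transpose]; exact (isUnit_iff_isUnit_det F).mp hF
  have hMinv : M⁻¹ * M = 1 := nonsing_inv_mul M hMd
  have hFinv : (Fᵀ)⁻¹ * Fᵀ = 1 := nonsing_inv_mul Fᵀ hFd
  have hFEt : F * Eᵀ = M - L := by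
    have := congrArg Matrix.transpose hEF
    simpa [transpose_mul, hMT, hLT, transpose_sub] using this
  have hPΘ : Matrix.fromBlocks M⁻¹ (M⁻¹ * E) (Eᵀ * M⁻¹) (-(Eᵀ * M⁻¹ * L * (Fᵀ)⁻¹)) *
      Matrix.fromBlocks L M Fᵀ 0 = Matrix.fromBlocks 1 1 0 Eᵀ := by
    rw [fromBlocks_multiply, fromBlocks_inj]
    refine ⟨?_, ?_, ?_, ?_⟩
    · rw [Matrix.mul_assoc M⁻¹ E, hEF, Matrix.mul_sub, hMinv]; abel
    · rw [hMinv, Matrix.mul_zero, add_zero]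
    · rw [Matrix.neg_mul, Matrix.mul_assoc (Eᵀ * M⁻¹ * L), hFinv, Matrix.mul_one,
        add_neg_cancel]
    · rw [Matrix.mul_zero, add_zero, Matrix.mul_assoc, hMinv, Matrix.mul_one]
  rw [Matrix.mul_assoc, hPΘ, fromBlocks_transpose, hMT, hLT, transpose_zero,
    fromBlocks_multiply, fromBlocks_inj, transpose_transpose]
  refine ⟨?_, ?_, ?_, ?_⟩
  · rw [Matrix.mul_one, Matrix.mul_zero, add_zero]
  · rw [Matrix.mul_one, hFEt]; abel
  · rw [Matrix.mul_one, Matrix.zero_mul, add_zero]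
  · rw [Matrix.mul_one, Matrix.zero_mul, add_zero]
end

section
/- Let n, m be positive integers and ι a finite index set. Let M be an n×n symmetric real matrix, and for each i ∈ ι let D i be an m×m positive definite real matrix and B i an m×n real matrix. Define the symmetric matrix X indexed by (Fin n) ⊕ (ι × Fin m) by: X (inl a) (inl b) = M a b, X (inl a) (inr (i,c)) = X (inr (i,c)) (inl a) = (B i) c a, X (inr (i,c)) (inr (i',c')) = −(D i) c c' if i = i' and 0 otherwise. Then X is negative definite if and only if M + ∑_i (B i)ᵀ·(D i)⁻¹·(B i) is negative definite. -/
/-!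
After negation the matrix is `fromBlocks (-M) Cᴴ C E`, where `C` stacks the blocks `-B i` and
`E` is the block-diagonal matrix of the `D i`. As `E` is positive definite, the Schur complement
criterion reduces the claim to `-M - Cᴴ E⁻¹ C`, and since `E⁻¹` is block diagonal with blocks
`(D i)⁻¹`, the product `Cᴴ E⁻¹ C` splits into `∑ i, (B i)ᵀ (D i)⁻¹ B i`. The definite Schur
criterion comes from the semidefinite one: a positive semidefinite matrix is definite iff its
determinant is nonzero, and `det (fromBlocks A B Bᴴ D) = det D * det (A - B D⁻¹ Bᴴ)`.
-/

open Matrix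
open scoped ComplexOrder MatrixOrder

namespace Matrix

variable {𝕜 : Type*} [RCLike 𝕜]

theorem posDef_fromBlocks₂₂_iff {p q : Type*} [Fintype p] [Fintype q] [DecidableEq p]
    [DecidableEq q] (A : Matrix p p 𝕜) (B : Matrix p q 𝕜) {D : Matrix q q 𝕜} (hD : D.PosDef) :
    (fromBlocks A B Bᴴ D).PosDef ↔ (A - B * D⁻¹ * Bᴴ).PosDef := by
  let _ := hD.isUnit.invertible
  have hdet : (fromBlocks A B Bᴴ D).det = D.det * (A - B * D⁻¹ * Bᴴ).det := by
    rw [det_fromBlocks₂₂, invOf_eq_nonsing_inv]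
  constructor
  · intro h
    refine ((PosDef.fromBlocks₂₂ A B hD).mp h.posSemidef).posDef_iff_det_ne_zero.mpr ?_
    exact right_ne_zero_of_mul (hdet ▸ h.det_pos.ne')
  · intro h
    refine ((PosDef.fromBlocks₂₂ A B hD).mpr h.posSemidef).posDef_iff_det_ne_zero.mpr ?_
    exact hdet ▸ mul_ne_zero hD.det_pos.ne' h.det_pos.ne'

variable {o m : Type*} [Fintype o] [Fintype m] [DecidableEq o]

theorem PosSemidef.blockDiagonal [DecidableEq m] {D : o → Matrix m m 𝕜}
    (hD : ∀ i, (D i).PosSemidef) :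
    (blockDiagonal D).PosSemidef := by
  choose C hC using fun i => CStarAlgebra.nonneg_iff_eq_star_mul_self.mp (hD i).nonneg
  have : Matrix.blockDiagonal D = (Matrix.blockDiagonal C)ᴴ * Matrix.blockDiagonal C := by
    rw [blockDiagonal_conjTranspose, ← blockDiagonal_mul]
    exact congrArg _ (funext hC)
  exact this ▸ posSemidef_conjTranspose_mul_self _

theorem PosDef.blockDiagonal [DecidableEq m] {D : o → Matrix m m 𝕜} (hD : ∀ i, (D i).PosDef) :
    (blockDiagonal D).PosDef := by
  refine (PosSemidef.blockDiagonal fun i => (hD i).posSemidef).posDef_iff_det_ne_zero.mpr ?_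
  rw [det_blockDiagonal]
  exact Finset.prod_ne_zero_iff.mpr fun i _ => (hD i).det_pos.ne'

theorem inv_blockDiagonal [DecidableEq m] {α : Type*} [CommRing α] {D : o → Matrix m m α}
    (hD : ∀ i, IsUnit (D i)) : (blockDiagonal D)⁻¹ = blockDiagonal fun i => (D i)⁻¹ := by
  refine inv_eq_right_inv ?_
  rw [← blockDiagonal_mul, ← blockDiagonal_one]
  exact congrArg _ (funext fun i => mul_nonsing_inv _ ((isUnit_iff_isUnit_det _).mp (hD i)))

/-- `blockDiagonal` indexes its rows by `m × o`; with the blocks stacked along `o × m` it has to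
be conjugated by `Prod.swap`. -/
def blockColumn {n α : Type*} (B : o → Matrix m n α) : Matrix (o × m) n α :=
  of fun ic a => B ic.1 ic.2 a

theorem conjTranspose_blockColumn_mul_blockDiagonal_submatrix_swap_mul {n α : Type*}
    [CommSemiring α] [StarRing α] (B : o → Matrix m n α) (D : o → Matrix m m α) :
    (blockColumn B)ᴴ * (blockDiagonal D).submatrix Prod.swap Prod.swap * blockColumn B =
      ∑ i, (B i)ᴴ * D i * B i := by
  ext a b
  simp [blockColumn, mul_apply, Matrix.sum_apply, Fintype.sum_prod_type, blockDiagonal_apply,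
    Finset.sum_mul, mul_ite]

theorem posDef_fromBlocks_blockColumn_blockDiagonal_iff {p : Type*} [Fintype p]
    [DecidableEq p] [DecidableEq m] (A : Matrix p p 𝕜) (B : o → Matrix m p 𝕜)
    {D : o → Matrix m m 𝕜} (hD : ∀ i, (D i).PosDef) :
    (fromBlocks A (blockColumn B)ᴴ (blockColumn B)
        ((blockDiagonal D).submatrix Prod.swap Prod.swap)).PosDef ↔
      (A - ∑ i, (B i)ᴴ * (D i)⁻¹ * B i).PosDef := by
  have hinv : ((blockDiagonal D).submatrix Prod.swap Prod.swap)⁻¹ =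
      (blockDiagonal fun i => (D i)⁻¹).submatrix Prod.swap Prod.swap := by
    rw [← inv_blockDiagonal fun i => (hD i).isUnit]
    exact inv_submatrix_equiv (blockDiagonal D) (Equiv.prodComm _ _) (Equiv.prodComm _ _)
  have hschur := posDef_fromBlocks₂₂_iff A (blockColumn B)ᴴ
    ((PosDef.blockDiagonal hD).submatrix Prod.swap_injective)
  rw [conjTranspose_conjTranspose] at hschur
  rw [hschur, Matrix.mul_assoc, hinv, ← Matrix.mul_assoc,
    conjTranspose_blockColumn_mul_blockDiagonal_submatrix_swap_mul]

end Matrix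

theorem stmt_11_general {ι : Type*} [Fintype ι] [DecidableEq ι] (n m : ℕ)
    (M : Matrix (Fin n) (Fin n) ℝ)
    (D : ι → Matrix (Fin m) (Fin m) ℝ) (hD : ∀ i, (D i).PosDef)
    (B : ι → Matrix (Fin m) (Fin n) ℝ) :
    (-(Matrix.fromBlocks M
          (Matrix.of fun (a : Fin n) (ic : ι × Fin m) => B ic.1 ic.2 a)
          (Matrix.of fun (ic : ι × Fin m) (a : Fin n) => B ic.1 ic.2 a)
          (Matrix.of fun (ic ic' : ι × Fin m) =>
            if ic.1 = ic'.1 then -(D ic.1 ic.2 ic'.2) else 0))).PosDef ↔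
      (-(M + ∑ i, (B i)ᵀ * (D i)⁻¹ * B i)).PosDef := by
  change (-fromBlocks M (blockColumn B)ᵀ (blockColumn B) _).PosDef ↔ _
  have hblocks : -fromBlocks M (blockColumn B)ᵀ (blockColumn B) (of fun ic ic' : ι × Fin m =>
        if ic.1 = ic'.1 then -(D ic.1 ic.2 ic'.2) else 0) =
      fromBlocks (-M) (blockColumn (-B))ᴴ (blockColumn (-B))
        ((blockDiagonal D).submatrix Prod.swap Prod.swap) := by
    rw [fromBlocks_neg]
    congr 1
    ext ⟨i, c⟩ ⟨i', c'⟩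
    by_cases h : i = i' <;> simp [blockDiagonal_apply, h]
  rw [hblocks, posDef_fromBlocks_blockColumn_blockDiagonal_iff _ _ hD]
  simp only [Pi.neg_apply, conjTranspose_eq_transpose_of_trivial, transpose_neg, Matrix.neg_mul,
    Matrix.mul_neg, neg_neg, sub_eq_add_neg, neg_add]

/-- Indexed-family Schur complement: the block matrix with upper-left block `M`,
off-diagonal blocks built from the `B i`, and block-diagonal lower-right part
`−diag(D i)` is negative definite iff `M + ∑ i, Bᵢᵀ Dᵢ⁻¹ Bᵢ` is negative definite. -/
theorem stmt_11 {ι : Type*} [Fintype ι] [DecidableEq ι] (n m : ℕ)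
    (hn : 0 < n) (hm : 0 < m)
    (M : Matrix (Fin n) (Fin n) ℝ) (hM : M.IsHermitian)
    (D : ι → Matrix (Fin m) (Fin m) ℝ) (hD : ∀ i, (D i).PosDef)
    (B : ι → Matrix (Fin m) (Fin n) ℝ) :
    (-(Matrix.fromBlocks M
          (Matrix.of fun (a : Fin n) (ic : ι × Fin m) => B ic.1 ic.2 a)
          (Matrix.of fun (ic : ι × Fin m) (a : Fin n) => B ic.1 ic.2 a)
          (Matrix.of fun (ic ic' : ι × Fin m) =>
            if ic.1 = ic'.1 then -(D ic.1 ic.2 ic'.2) else 0))).PosDef ↔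
      (-(M + ∑ i, (B i)ᵀ * (D i)⁻¹ * B i)).PosDef :=
  stmt_11_general n m M D hD B
end

section
/- Let n, q, N be positive integers, p : Fin N → ℝ with p j ≥ 0 and ∑_j p j = 1, let P : Fin N → Matrix n n ℝ be a family of symmetric matrices, S an n×n positive semidefinite real matrix, R a q×q positive semidefinite real matrix, K a q×n real matrix, Ā an n×n real matrix, i ∈ Fin N, and σ ∈ ℝ. Assume the matrix (P i) − ∑_j p j · (Āᵀ·(P j)·Ā) − S − Kᵀ·R·K is positive semidefinite. Then every x ∈ ℝⁿ with xᵀ·(P i)·x ≤ σ satisfies ∑_j p j · ((Ā·x)ᵀ·(P j)·(Ā·x)) ≤ σ. -/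
/-!
Adding the positive semidefinite matrices `S` and `KᵀRK` to the hypothesis shows that
`P i - ∑ⱼ pⱼ ĀᵀPⱼĀ` is positive semidefinite; its quadratic form at `x` says
`∑ⱼ pⱼ (Āx)ᵀPⱼ(Āx) ≤ xᵀ(P i)x ≤ σ`.
-/

open Matrix

namespace Matrix

variable {m n ι α : Type*} [Fintype m] [Fintype n]

theorem dotProduct_transpose_mul_mul_mulVec [CommSemiring α] (A : Matrix m n α)
    (M : Matrix m m α) (x : n → α) :
    x ⬝ᵥ (Aᵀ * M * A) *ᵥ x = (A *ᵥ x) ⬝ᵥ M *ᵥ (A *ᵥ x) := by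
  rw [← mulVec_mulVec, ← mulVec_mulVec, dotProduct_mulVec, vecMul_transpose]

theorem dotProduct_sum_smul_mulVec [CommSemiring α] (s : Finset ι) (c : ι → α)
    (M : ι → Matrix n n α) (x : n → α) :
    x ⬝ᵥ (∑ j ∈ s, c j • M j) *ᵥ x = ∑ j ∈ s, c j * (x ⬝ᵥ M j *ᵥ x) := by
  simp only [sum_mulVec, dotProduct_sum, smul_mulVec, dotProduct_smul, smul_eq_mul]

theorem PosSemidef.dotProduct_mulVec_le [CommRing α] [PartialOrder α] [StarRing α]
    [TrivialStar α] [StarOrderedRing α] {A B : Matrix n n α} (h : (A - B).PosSemidef)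
    (x : n → α) : x ⬝ᵥ B *ᵥ x ≤ x ⬝ᵥ A *ᵥ x := by
  have := h.dotProduct_mulVec_nonneg x
  rwa [star_trivial, sub_mulVec, dotProduct_sub, sub_nonneg] at this

end Matrix

theorem stmt_15_general (n q N : ℕ)
    (p : Fin N → ℝ)
    (P : Fin N → Matrix (Fin n) (Fin n) ℝ)
    (S : Matrix (Fin n) (Fin n) ℝ) (hS : S.PosSemidef)
    (R : Matrix (Fin q) (Fin q) ℝ) (hR : R.PosSemidef)
    (K : Matrix (Fin q) (Fin n) ℝ) (Abar : Matrix (Fin n) (Fin n) ℝ)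
    (i : Fin N) (σ : ℝ)
    (h : (P i - (∑ j, p j • (Abarᵀ * P j * Abar)) - S - Kᵀ * R * K).PosSemidef) :
    ∀ x : Fin n → ℝ, x ⬝ᵥ P i *ᵥ x ≤ σ →
      ∑ j, p j * ((Abar *ᵥ x) ⬝ᵥ P j *ᵥ (Abar *ᵥ x)) ≤ σ := by
  intro x hx
  have hKRK : (Kᵀ * R * K).PosSemidef := by
    simpa only [conjTranspose_eq_transpose_of_trivial] using hR.conjTranspose_mul_mul_same K
  have hdecrease : (P i - ∑ j, p j • (Abarᵀ * P j * Abar)).PosSemidef := by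
    convert h.add (hS.add hKRK) using 1
    abel
  calc ∑ j, p j * ((Abar *ᵥ x) ⬝ᵥ P j *ᵥ (Abar *ᵥ x))
      = x ⬝ᵥ (∑ j, p j • (Abarᵀ * P j * Abar)) *ᵥ x := by
        simp only [dotProduct_sum_smul_mulVec, dotProduct_transpose_mul_mul_mulVec]
    _ ≤ x ⬝ᵥ P i *ᵥ x := hdecrease.dotProduct_mulVec_le x
    _ ≤ σ := hx

/-- Positive control invariance of the terminal constraint set: if
`P i − ∑ⱼ pⱼ Āᵀ Pⱼ Ā − S − KᵀRK ⪰ 0`, then `xᵀ P i x ≤ σ` implies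
`∑ⱼ pⱼ (Āx)ᵀ Pⱼ (Āx) ≤ σ`. -/
theorem stmt_15 (n q N : ℕ) (hn : 0 < n) (hq : 0 < q) (hN : 0 < N)
    (p : Fin N → ℝ) (hp : ∀ j, 0 ≤ p j) (hp1 : ∑ j, p j = 1)
    (P : Fin N → Matrix (Fin n) (Fin n) ℝ) (hPsymm : ∀ j, (P j).IsHermitian)
    (S : Matrix (Fin n) (Fin n) ℝ) (hS : S.PosSemidef)
    (R : Matrix (Fin q) (Fin q) ℝ) (hR : R.PosSemidef)
    (K : Matrix (Fin q) (Fin n) ℝ) (Abar : Matrix (Fin n) (Fin n) ℝ)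
    (i : Fin N) (σ : ℝ)
    (h : (P i - (∑ j, p j • (Abarᵀ * P j * Abar)) - S - Kᵀ * R * K).PosSemidef) :
    ∀ x : Fin n → ℝ, x ⬝ᵥ P i *ᵥ x ≤ σ →
      ∑ j, p j * ((Abar *ᵥ x) ⬝ᵥ P j *ᵥ (Abar *ᵥ x)) ≤ σ :=
  stmt_15_general n q N p P S hS R hR K Abar i σ h
end
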